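/- Let n ≥ 1 and f_0, f_1 ∈ ℕ with f_0 + f_1 = n, and work in B_n = G(2,n). The subspace of M spanned by {C_v : v ∈ I(2,n), |v| = id, #{i : z_i(v) = 0} = f_0} is invariant under all the operators ϱ(g) for g ∈ B_n, has dimension binomial(n, f_0), and the resulting representation of B_n on it is irreducible. -/

import Mathlib

noncomputable section

/-- The wreath product `G(r,n) = C_r ≀ S_n`, realized as pairs of a color vector
`z : Fin n → ZMod r` and a permutation `p` of `Fin n`. -/
@[ext] structure WreathG (r n : ℕ) where
  z : Fin n → ZMod r
  p : Equiv.Perm (Fin n)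

namespace WreathG

variable {r n : ℕ}

instance : One (WreathG r n) := ⟨⟨0, 1⟩⟩
instance : Mul (WreathG r n) := ⟨fun g h => ⟨g.z + h.z ∘ g.p.symm, g.p * h.p⟩⟩
instance : Inv (WreathG r n) := ⟨fun g => ⟨-(g.z ∘ g.p), g.p⁻¹⟩⟩

@[simp] theorem one_z : (1 : WreathG r n).z = 0 := rfl
@[simp] theorem one_p : (1 : WreathG r n).p = 1 := rfl
@[simp] theorem mul_z (a b : WreathG r n) : (a * b).z = a.z + b.z ∘ a.p.symm := rfl
@[simp] theorem mul_p (a b : WreathG r n) : (a * b).p = a.p * b.p := rfl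
@[simp] theorem inv_z (a : WreathG r n) : (a⁻¹).z = -(a.z ∘ a.p) := rfl
@[simp] theorem inv_p (a : WreathG r n) : (a⁻¹).p = a.p⁻¹ := rfl

instance : Group (WreathG r n) :=
  Group.ofLeftAxioms
    (fun a b c => by
      refine WreathG.ext ?_ (mul_assoc a.p b.p c.p)
      funext x
      show (a.z x + b.z (a.p.symm x)) + c.z ((a.p * b.p).symm x)
          = a.z x + (b.z (a.p.symm x) + c.z (b.p.symm (a.p.symm x)))
      have h : (a.p * b.p).symm x = b.p.symm (a.p.symm x) := rfl
      rw [h, add_assoc])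
    (fun a => by
      refine WreathG.ext ?_ (one_mul a.p)
      funext x
      show 0 + a.z ((1 : Equiv.Perm (Fin n)).symm x) = a.z x
      simp [Equiv.Perm.one_symm])
    (fun a => by
      refine WreathG.ext ?_ (inv_mul_cancel a.p)
      funext x
      show -(a.z (a.p x)) + a.z ((a.p⁻¹).symm x) = 0
      have h : (a.p⁻¹).symm x = a.p x := rfl
      rw [h, neg_add_cancel])

/-- An absolute involution of `G(r,n)`: `|v|² = 1` and `z ∘ |v| = z`. -/
def IsAbsInv (v : WreathG r n) : Prop := v.p ^ 2 = 1 ∧ v.z ∘ v.p = v.z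

instance (v : WreathG r n) : Decidable (IsAbsInv v) :=
  inferInstanceAs (Decidable (_ ∧ _))

/-- Absolute conjugation `τ·(z,σ)·τ⁻¹ = (z ∘ τ⁻¹, τστ⁻¹)`. -/
def aconj (τ : Equiv.Perm (Fin n)) (v : WreathG r n) : WreathG r n :=
  ⟨v.z ∘ τ.symm, τ * v.p * τ⁻¹⟩

theorem IsAbsInv.aconj {v : WreathG r n} (h : IsAbsInv v) (τ : Equiv.Perm (Fin n)) :
    IsAbsInv (WreathG.aconj τ v) := by
  obtain ⟨h1, h2⟩ := h
  constructor
  · show (τ * v.p * τ⁻¹) ^ 2 = 1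
    have key : (τ * v.p * τ⁻¹) * (τ * v.p * τ⁻¹) = τ * (v.p * v.p) * τ⁻¹ := by
      simp [mul_assoc]
    rw [sq, key, ← sq, h1, mul_one, mul_inv_cancel]
  · funext x
    have := congrFun h2 (τ.symm x)
    simpa [WreathG.aconj, Function.comp] using this

/-- `⟨g,v⟩ = ∑ i z_i(g)·z_i(v) ∈ ZMod r`. -/
def pairing (g v : WreathG r n) : ZMod r := ∑ i, g.z i * v.z i

/-- `inv_v(g)`: the number of pairs `i < j` with `|v|(i) = j` and `|g|(i) > |g|(j)`. -/
def invv (v g : WreathG r n) : ℕ :=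
  Nat.card {q : Fin n × Fin n // q.1 < q.2 ∧ v.p q.1 = q.2 ∧ g.p q.2 < g.p q.1}

/-- The number of inversions of a permutation. -/
def invPerm (σ : Equiv.Perm (Fin n)) : ℕ :=
  Nat.card {q : Fin n × Fin n // q.1 < q.2 ∧ σ q.2 < σ q.1}

/-- `fix_i(v)`: the number of `j` with `|v|(j) = j` and `z_j(v) = i`. -/
def fixc (v : WreathG r n) (i : ZMod r) : ℕ :=
  Nat.card {j : Fin n // v.p j = j ∧ v.z j = i}

/-- `pair_i(v)`: the number of pairs `j < k` with `|v|(j) = k` and `z_j(v) = z_k(v) = i`. -/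
def pairc (v : WreathG r n) (i : ZMod r) : ℕ :=
  Nat.card {q : Fin n × Fin n // q.1 < q.2 ∧ v.p q.1 = q.2 ∧ v.z q.1 = i ∧ v.z q.2 = i}

instance : DecidableEq (WreathG r n) := fun a b =>
  decidable_of_iff (a.z = b.z ∧ a.p = b.p)
    (by constructor
        · rintro ⟨h1, h2⟩; exact WreathG.ext h1 h2
        · rintro rfl; exact ⟨rfl, rfl⟩)

instance [NeZero r] : Fintype (WreathG r n) :=
  Fintype.ofEquiv ((Fin n → ZMod r) × Equiv.Perm (Fin n))
    { toFun := fun x => ⟨x.1, x.2⟩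
      invFun := fun g => (g.z, g.p)
      left_inv := fun _ => rfl
      right_inv := fun _ => rfl }

end WreathG

/-- The set `I(r,n)` of absolute involutions, as a subtype. -/
abbrev AbsInv (r n : ℕ) := {v : WreathG r n // WreathG.IsAbsInv v}

/-- The model space `M`: the complex vector space with basis `{C_v : v ∈ I(r,n)}`. -/
abbrev ModelSpace (r n : ℕ) := AbsInv r n →₀ ℂ

/-- `ζ_r = exp(2πi/r)`. -/
def zetaC (r : ℕ) : ℂ := Complex.exp (2 * Real.pi * Complex.I / r)

/-- `ζ_r` raised to an exponent in `ZMod r` (well defined since `ζ_r^r = 1`). -/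
def zetaPow (r : ℕ) (a : ZMod r) : ℂ := zetaC r ^ a.val

/-- The Gelfand model operator `ϱ(g) C_v = ζ_r^{⟨g,v⟩} (−1)^{inv_v(g)} C_{|g|v|g|⁻¹}`. -/
def modelRho {r n : ℕ} (g : WreathG r n) :
    ModelSpace r n →ₗ[ℂ] ModelSpace r n :=
  Finsupp.lsum ℂ fun v =>
    ((zetaPow r (WreathG.pairing g v.1) * (-1 : ℂ) ^ WreathG.invv v.1 g) •
      Finsupp.lsingle (⟨WreathG.aconj g.p v.1, v.2.aconj g.p⟩ : AbsInv r n))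

/-- The auxiliary operator `φ(g) C_v = ζ_r^{⟨g,v⟩} C_{|g|v|g|⁻¹}`. -/
def modelPhi {r n : ℕ} (g : WreathG r n) :
    ModelSpace r n →ₗ[ℂ] ModelSpace r n :=
  Finsupp.lsum ℂ fun v =>
    ((zetaPow r (WreathG.pairing g v.1)) •
      Finsupp.lsingle (⟨WreathG.aconj g.p v.1, v.2.aconj g.p⟩ : AbsInv r n))

/-- `(−1)` raised to an exponent in `ZMod 2`. -/
def negOnePow2 (a : ZMod 2) : ℂ := (-1 : ℂ) ^ a.val

/-- The Gelfand model operator for `B_n = G(2,n)`: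
`ϱ(g) C_v = (−1)^{⟨g,v⟩} (−1)^{inv_v(g)} C_{|g|v|g|⁻¹}`. -/
def modelRho2 {n : ℕ} (g : WreathG 2 n) : ModelSpace 2 n →ₗ[ℂ] ModelSpace 2 n :=
  Finsupp.lsum ℂ fun v =>
    ((negOnePow2 (WreathG.pairing g v.1) * (-1 : ℂ) ^ WreathG.invv v.1 g) •
      Finsupp.lsingle (⟨WreathG.aconj g.p v.1, v.2.aconj g.p⟩ : AbsInv 2 n))

/-- The auxiliary operator for `B_n = G(2,n)`: `φ(g) C_v = (−1)^{⟨g,v⟩} C_{|g|v|g|⁻¹}`. -/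
def modelPhi2 {n : ℕ} (g : WreathG 2 n) : ModelSpace 2 n →ₗ[ℂ] ModelSpace 2 n :=
  Finsupp.lsum ℂ fun v =>
    ((negOnePow2 (WreathG.pairing g v.1)) •
      Finsupp.lsingle (⟨WreathG.aconj g.p v.1, v.2.aconj g.p⟩ : AbsInv 2 n))


/-!
Since `inv_v(g) = 0` whenever `|v| = id`, every `ϱ(g)` maps a basis vector `C_v` of the diagonal
class to `±C_{|g|v|g|⁻¹}`, again in the class; so the span is the space of functions supported on
the class, which is in bijection with the `f₀`-subsets of `Fin n` via the zero set.
The diagonal subgroup `{(ε, id)}` acts on `C_v` by the sign character `ε ↦ (-1)^{⟨ε, z(v)⟩}`, and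
distinct members of the class have distinct characters, so by orthogonality of characters a
nonzero invariant subspace contains some `C_{v₀}`. As `Sₙ` acts transitively on the class by
absolute conjugation, it then contains every `C_v`.
-/

namespace WreathG

variable {r n : ℕ}

theorem invv_eq_zero_of_p_eq_one_left {v : WreathG r n} (hv : v.p = 1) (g : WreathG r n) :
    invv v g = 0 := by
  refine Nat.card_eq_zero.mpr (.inl ⟨fun ⟨q, hlt, hq, _⟩ => ?_⟩)
  rw [hv, Equiv.Perm.one_apply] at hq
  exact hlt.ne hq

theorem invv_eq_zero_of_p_eq_one_right (v : WreathG r n) {g : WreathG r n} (hg : g.p = 1) :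
    invv v g = 0 := by
  refine Nat.card_eq_zero.mpr (.inl ⟨fun ⟨q, hlt, _, hq⟩ => ?_⟩)
  rw [hg, Equiv.Perm.one_apply, Equiv.Perm.one_apply] at hq
  exact hlt.not_gt hq

def diag (ε : Fin n → ZMod r) : WreathG r n := ⟨ε, 1⟩

@[simp] theorem diag_p (ε : Fin n → ZMod r) : (diag ε).p = 1 := rfl

@[simp] theorem aconj_one (v : WreathG r n) : aconj 1 v = v := by
  ext i
  · rfl
  · simp [aconj]

theorem isAbsInv_diag (z : Fin n → ZMod r) : IsAbsInv (diag z) :=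
  ⟨one_pow 2, rfl⟩

end WreathG

open WreathG Finsupp

section SignCharacter

variable {n : ℕ}

def signChar (w : Fin n → ZMod 2) : AddChar (Fin n → ZMod 2) ℂ :=
  (AddChar.zmodChar 2 (neg_one_sq : (-1 : ℂ) ^ 2 = 1)).compAddMonoidHom
    (AddMonoidHom.mk' (fun ε => ∑ i, ε i * w i) fun ε δ => by
      simp only [Pi.add_apply, add_mul, Finset.sum_add_distrib])

theorem signChar_apply (w ε : Fin n → ZMod 2) :
    signChar w ε = negOnePow2 (∑ i, ε i * w i) := rfl

theorem sum_signChar (w : Fin n → ZMod 2) :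
    ∑ ε, signChar w ε = if w = 0 then (2 : ℂ) ^ n else 0 := by
  split_ifs with hw
  · simp [hw, signChar_apply, negOnePow2]
  refine AddChar.sum_eq_zero_of_ne_one fun h => ?_
  obtain ⟨i, hi⟩ := Function.ne_iff.mp hw
  replace hi : w i = 1 := Fin.eq_one_of_ne_zero _ hi
  have := DFunLike.congr_fun h (Pi.single i 1)
  norm_num [signChar_apply, Pi.single_apply, hi, negOnePow2, ZMod.val_one] at this

theorem sum_signChar_mul_signChar (u w : Fin n → ZMod 2) :
    ∑ ε, signChar u ε * signChar w ε = if u = w then (2 : ℂ) ^ n else 0 := by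
  have hmul (ε) : signChar u ε * signChar w ε = signChar (u + w) ε := by
    simp only [signChar, AddChar.compAddMonoidHom_apply, AddMonoidHom.mk'_apply, Pi.add_apply,
      mul_add, Finset.sum_add_distrib, AddChar.map_add_eq_mul]
  have hneg : -w = w := funext fun i => ZMod.neg_eq_self_mod_two (w i)
  simp only [hmul, sum_signChar, add_eq_zero_iff_eq_neg, hneg]

end SignCharacter

section ModelOperator

variable {n : ℕ}

theorem modelRho2_single (g : WreathG 2 n) (v : AbsInv 2 n) :
    modelRho2 g (single v 1) = (negOnePow2 (pairing g v.1) * (-1) ^ invv v.1 g) •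
      single ⟨aconj g.p v.1, v.2.aconj g.p⟩ 1 := by
  simp [modelRho2]

theorem modelRho2_single_of_p_eq_one (g : WreathG 2 n) {v : AbsInv 2 n} (hv : v.1.p = 1) :
    modelRho2 g (single v 1) =
      negOnePow2 (pairing g v.1) • single ⟨aconj g.p v.1, v.2.aconj g.p⟩ 1 := by
  rw [modelRho2_single, invv_eq_zero_of_p_eq_one_left hv, pow_zero, mul_one]

theorem modelRho2_diag_apply (ε : Fin n → ZMod 2) (x : ModelSpace 2 n) (u : AbsInv 2 n) :
    modelRho2 (diag ε) x u = signChar u.1.z ε * x u := by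
  induction x using Finsupp.induction_linear with
  | zero => simp
  | add x y hx hy => simp [hx, hy, mul_add]
  | single v a =>
    rw [← mul_one a, ← smul_eq_mul, ← smul_single, map_smul, modelRho2_single,
      invv_eq_zero_of_p_eq_one_right _ (diag_p ε)]
    obtain rfl | huv := eq_or_ne v u
    · simp [signChar_apply, pairing, diag, mul_comm]
    · simp [huv]

/-- Diagonal involutions are told apart by their colours, hence by their sign characters. -/
theorem sum_signChar_smul_modelRho2_diag {x : ModelSpace 2 n}
    (hx : x ∈ supported ℂ ℂ {v | v.1.p = 1}) {v₀ : AbsInv 2 n} (hv₀ : v₀.1.p = 1) :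
    ∑ ε, signChar v₀.1.z ε • modelRho2 (diag ε) x = ((2 : ℂ) ^ n * x v₀) • single v₀ 1 := by
  ext u
  simp only [finsetSum_apply, Finsupp.smul_apply, modelRho2_diag_apply, smul_eq_mul, ← mul_assoc,
    ← Finset.sum_mul, sum_signChar_mul_signChar, single_apply]
  obtain rfl | hu := eq_or_ne v₀ u
  · simp
  by_cases hxu : x u = 0
  · simp [hxu, hu]
  have hu_p : u.1.p = 1 := (mem_supported ℂ x).mp hx (mem_support_iff.mpr hxu)
  have hz : v₀.1.z ≠ u.1.z := fun h =>
    hu (Subtype.ext (WreathG.ext h (hv₀.trans hu_p.symm)))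
  simp [hz, hu]

end ModelOperator

def zeroSetEquiv (α : Type*) [Fintype α] [DecidableEq α] : (α → ZMod 2) ≃ Finset α where
  toFun z := Finset.univ.filter fun i => z i = 0
  invFun s i := if i ∈ s then 0 else 1
  left_inv z := funext fun i => by
    by_cases h : z i = 0
    · simp [h]
    · have h1 : z i = 1 := Fin.eq_one_of_ne_zero _ h
      simp [h1]
  right_inv s := by ext; simp

theorem exists_perm_comp_eq {α : Type*} [Fintype α] {z₀ z₁ : α → ZMod 2}
    (h : (Finset.univ.filter fun i => z₀ i = 0).card =
      (Finset.univ.filter fun i => z₁ i = 0).card) :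
    ∃ σ : Equiv.Perm α, z₀ ∘ σ = z₁ := by
  have hone (z : α → ZMod 2) :
      Fintype.card {a // z a = 1} = Fintype.card α - Fintype.card {a // z a = 0} := by
    rw [← Fintype.card_subtype_compl]
    exact Fintype.card_congr <| Equiv.subtypeEquivRight fun a => by
      generalize z a = b; revert b; decide
  have hzero : Fintype.card {a // z₁ a = 0} = Fintype.card {a // z₀ a = 0} := by
    simp only [Fintype.card_subtype, h]
  have hfiber : ∀ c, Fintype.card {a // z₁ a = c} = Fintype.card {a // z₀ a = c} := by
    intro c
    obtain rfl | rfl : c = 0 ∨ c = 1 := by revert c; decide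
    · exact hzero
    · rw [hone, hone, hzero]
  exact ⟨.ofFiberEquiv fun c => Fintype.equivOfCardEq (hfiber c),
    funext (Equiv.ofFiberEquiv_map _)⟩

section DiagonalClass

variable {n : ℕ}

def diagonalClass (n f₀ : ℕ) : Set (AbsInv 2 n) :=
  {v | v.1.p = 1 ∧ (Finset.univ.filter fun i => v.1.z i = 0).card = f₀}

theorem span_single_diagonalClass (n f₀ : ℕ) :
    Submodule.span ℂ {x | ∃ v : AbsInv 2 n, v.1.p = 1 ∧
        (Finset.univ.filter fun i => v.1.z i = 0).card = f₀ ∧ x = single v 1} =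
      supported ℂ ℂ (diagonalClass n f₀) := by
  rw [supported_eq_span_single]
  congr 1
  ext x
  simp [diagonalClass, eq_comm, and_assoc]

def diagonalClassEquiv (n f₀ : ℕ) :
    diagonalClass n f₀ ≃ {s : Finset (Fin n) // s.card = f₀} where
  toFun v := ⟨zeroSetEquiv _ v.1.1.z, v.2.2⟩
  invFun s := ⟨⟨diag ((zeroSetEquiv _).symm s), isAbsInv_diag _⟩, rfl,
    (congrArg Finset.card ((zeroSetEquiv _).apply_symm_apply s.1)).trans s.2⟩
  left_inv v := Subtype.ext <| Subtype.ext <| WreathG.ext (by simp [diag]) v.2.1.symm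
  right_inv s := Subtype.ext (by simp [diag])

theorem finrank_supported_diagonalClass (n f₀ : ℕ) :
    Module.finrank ℂ (supported ℂ ℂ (diagonalClass n f₀)) = n.choose f₀ := by
  classical
  rw [(supportedEquivFinsupp _).finrank_eq, Module.finrank_finsupp_self,
    Fintype.card_congr (diagonalClassEquiv n f₀), Fintype.card_finset_len, Fintype.card_fin]

theorem aconj_mem_diagonalClass {f₀ : ℕ} {v : AbsInv 2 n} (hv : v ∈ diagonalClass n f₀)
    (τ : Equiv.Perm (Fin n)) : (⟨aconj τ v.1, v.2.aconj τ⟩ : AbsInv 2 n) ∈ diagonalClass n f₀ := by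
  obtain ⟨hp, hcard⟩ := hv
  refine ⟨by simp [aconj, hp], hcard ▸ ?_⟩
  simp only [← Fintype.card_subtype]
  exact Fintype.card_congr (τ.symm.subtypeEquiv fun _ => Iff.rfl)

theorem exists_aconj_eq {f₀ : ℕ} {v w : AbsInv 2 n} (hv : v ∈ diagonalClass n f₀)
    (hw : w ∈ diagonalClass n f₀) :
    ∃ τ : Equiv.Perm (Fin n), (⟨aconj τ v.1, v.2.aconj τ⟩ : AbsInv 2 n) = w := by
  obtain ⟨σ, hσ⟩ := exists_perm_comp_eq (hv.2.trans hw.2.symm)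
  refine ⟨σ.symm, Subtype.ext (WreathG.ext hσ ?_)⟩
  simp [aconj, hv.1, hw.1]

end DiagonalClass

section Irreducibility

variable {n f₀ : ℕ}

theorem modelRho2_mem_supported_diagonalClass (g : WreathG 2 n) {x : ModelSpace 2 n}
    (hx : x ∈ supported ℂ ℂ (diagonalClass n f₀)) :
    modelRho2 g x ∈ supported ℂ ℂ (diagonalClass n f₀) := by
  suffices h : supported ℂ ℂ (diagonalClass n f₀) ≤
      (supported ℂ ℂ (diagonalClass n f₀)).comap (modelRho2 g) from h hx
  refine (supported_eq_span_single ℂ _).le.trans (Submodule.span_le.mpr ?_)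
  rintro _ ⟨v, hv, rfl⟩
  rw [SetLike.mem_coe, Submodule.mem_comap, modelRho2_single_of_p_eq_one g hv.1]
  exact Submodule.smul_mem _ _ (single_mem_supported ℂ 1 (aconj_mem_diagonalClass hv g.p))

theorem supported_diagonalClass_le_of_invariant {U : Submodule ℂ (ModelSpace 2 n)}
    (hUD : U ≤ supported ℂ ℂ (diagonalClass n f₀)) (hU : ∀ g, ∀ x ∈ U, modelRho2 g x ∈ U)
    (hU₀ : U ≠ ⊥) : supported ℂ ℂ (diagonalClass n f₀) ≤ U := by
  obtain ⟨x, hxU, hx₀⟩ := (Submodule.ne_bot_iff U).mp hU₀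
  obtain ⟨v₀, hv₀⟩ := support_nonempty_iff.mpr hx₀
  have hv₀D : v₀ ∈ diagonalClass n f₀ := (mem_supported ℂ x).mp (hUD hxU) hv₀
  have hsingle : single v₀ 1 ∈ U := by
    have hxdiag : x ∈ supported ℂ ℂ {v : AbsInv 2 n | v.1.p = 1} :=
      supported_mono (fun _ hv => hv.1) (hUD hxU)
    have hproj : ((2 : ℂ) ^ n * x v₀) • single v₀ 1 ∈ U := by
      rw [← sum_signChar_smul_modelRho2_diag hxdiag hv₀D.1]
      exact Submodule.sum_mem _ fun ε _ => Submodule.smul_mem _ _ (hU _ x hxU)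
    exact (Submodule.smul_mem_iff _ (mul_ne_zero (by simp) (mem_support_iff.mp hv₀))).mp hproj
  refine (supported_eq_span_single ℂ _).le.trans (Submodule.span_le.mpr ?_)
  rintro _ ⟨v, hv, rfl⟩
  obtain ⟨τ, hτ⟩ := exists_aconj_eq hv₀D hv
  have := hU ⟨0, τ⟩ _ hsingle
  rw [modelRho2_single_of_p_eq_one _ hv₀D.1, hτ] at this
  simpa [pairing, negOnePow2] using this

end Irreducibility

theorem span_diagonal_class_irreducible_general (n f₀ f₁ : ℕ) (hf : f₀ + f₁ = n) :
    ∀ W : Submodule ℂ (ModelSpace 2 n),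
      W = Submodule.span ℂ
          {x | ∃ v : AbsInv 2 n, v.1.p = 1 ∧
            (Finset.univ.filter fun i => v.1.z i = 0).card = f₀ ∧
            x = Finsupp.single v 1} →
      (∀ g : WreathG 2 n, ∀ x ∈ W, modelRho2 g x ∈ W) ∧
      Module.finrank ℂ W = Nat.choose n f₀ ∧
      W ≠ ⊥ ∧
      (∀ U : Submodule ℂ (ModelSpace 2 n), U ≤ W →
        (∀ g : WreathG 2 n, ∀ x ∈ U, modelRho2 g x ∈ U) → U = ⊥ ∨ U = W) := by
  rintro W rfl
  rw [span_single_diagonalClass]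
  have hdim := finrank_supported_diagonalClass n f₀
  refine ⟨fun g x => modelRho2_mem_supported_diagonalClass g, hdim, fun hbot => ?_,
    fun U hUW hU => or_iff_not_imp_left.mpr fun hU₀ =>
      le_antisymm hUW (supported_diagonalClass_le_of_invariant hUW hU hU₀)⟩
  rw [hbot, finrank_bot] at hdim
  exact (Nat.choose_pos (by omega : f₀ ≤ n)).ne hdim

/-- The span of the basis vectors `C_v` with `|v| = id` and exactly `f₀`
zero-colored entries is a `ϱ`-invariant subspace of `M` of dimension `binomial(n, f₀)`,
and the resulting representation of `B_n` on it is irreducible. -/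
theorem span_diagonal_class_irreducible (n f₀ f₁ : ℕ) (hn : 1 ≤ n) (hf : f₀ + f₁ = n) :
    ∀ W : Submodule ℂ (ModelSpace 2 n),
      W = Submodule.span ℂ
          {x | ∃ v : AbsInv 2 n, v.1.p = 1 ∧
            (Finset.univ.filter fun i => v.1.z i = 0).card = f₀ ∧
            x = Finsupp.single v 1} →
      (∀ g : WreathG 2 n, ∀ x ∈ W, modelRho2 g x ∈ W) ∧
      Module.finrank ℂ W = Nat.choose n f₀ ∧
      W ≠ ⊥ ∧
      (∀ U : Submodule ℂ (ModelSpace 2 n), U ≤ W →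
        (∀ g : WreathG 2 n, ∀ x ∈ U, modelRho2 g x ∈ U) → U = ⊥ ∨ U = W) :=
  span_diagonal_class_irreducible_general n f₀ f₁ hf
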